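/- Fix a real number r. For a nonzero quaternion a let q(a) = cos(r·log‖a‖) + sin(r·log‖a‖)·i ∈ ℍ, and define a ∘ x = a · q(a)⁻¹ · x · q(a) for a ≠ 0, and 0 ∘ x = 0. Then every nonzero quaternion has a two-sided inverse for ∘: for every a ≠ 0 there exists b ≠ 0 with a ∘ b = 1 and b ∘ a = 1. Together with associativity and the identity 1, the nonzero quaternions form a group under ∘. -/

import Mathlib

open Quaternion
open scoped Classical

/-- The unit quaternion `‖a‖^{ir} = cos(r·log‖a‖) + sin(r·log‖a‖)·i`. -/
noncomputable def kalscheuerUnit (r : ℝ) (a : Quaternion ℝ) : Quaternion ℝ :=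
  ⟨Real.cos (r * Real.log ‖a‖), Real.sin (r * Real.log ‖a‖), 0, 0⟩

/-- The Kalscheuer nearfield multiplication `a ∘ x = a · q(a)⁻¹ · x · q(a)`
(for `a ≠ 0`, and `0 ∘ x = 0`), where `q(a) = ‖a‖^{ir}`. -/
noncomputable def kalscheuerMul (r : ℝ) (a x : Quaternion ℝ) : Quaternion ℝ :=
  if a = 0 then 0 else a * (kalscheuerUnit r a)⁻¹ * x * kalscheuerUnit r a

/-! The inverse of `a` is `b = q a⁻¹ q⁻¹` with `q = q(a)`: conjugation preserves norms, so
`‖b‖ = ‖a‖⁻¹`, hence `log ‖b‖ = -log ‖a‖` and `q(b) = q̄ = q⁻¹`, and both products collapse. -/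

theorem Quaternion.star_eq_inv_of_norm_eq_one {u : ℍ[ℝ]} (hu : ‖u‖ = 1) : star u = u⁻¹ :=
  eq_inv_of_mul_eq_one_left <| by rw [star_mul_self, normSq_eq_norm_mul_self, hu]; simp

theorem kalscheuerUnit_norm (r : ℝ) (a : ℍ[ℝ]) : ‖kalscheuerUnit r a‖ = 1 := by
  have h : normSq (kalscheuerUnit r a) = 1 := by rw [normSq_def']; simp [kalscheuerUnit]
  rw [normSq_eq_norm_mul_self] at h
  nlinarith [norm_nonneg (kalscheuerUnit r a)]

theorem kalscheuerUnit_ne_zero (r : ℝ) (a : ℍ[ℝ]) : kalscheuerUnit r a ≠ 0 :=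
  norm_ne_zero_iff.mp (by rw [kalscheuerUnit_norm]; exact one_ne_zero)

theorem kalscheuerUnit_of_norm_eq_inv (r : ℝ) {a b : ℍ[ℝ]} (h : ‖b‖ = ‖a‖⁻¹) :
    kalscheuerUnit r b = (kalscheuerUnit r a)⁻¹ := by
  rw [← star_eq_inv_of_norm_eq_one (kalscheuerUnit_norm r a)]
  ext <;> simp only [re_star, imI_star, imJ_star, imK_star] <;>
    simp [kalscheuerUnit, h, Real.log_inv]

theorem kalscheuerMul_of_ne_zero (r : ℝ) {a : ℍ[ℝ]} (ha : a ≠ 0) (x : ℍ[ℝ]) :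
    kalscheuerMul r a x = a * (kalscheuerUnit r a)⁻¹ * x * kalscheuerUnit r a :=
  if_neg ha

/-- In Kalscheuer's nearfield, every nonzero quaternion has a two-sided inverse
for the multiplication `∘`: together with associativity and the identity `1`,
the nonzero quaternions form a group under `∘`. -/
theorem kalscheuerMul_exists_inverse (r : ℝ) (a : Quaternion ℝ) (ha : a ≠ 0) :
    ∃ b : Quaternion ℝ, b ≠ 0 ∧ kalscheuerMul r a b = 1 ∧ kalscheuerMul r b a = 1 := by
  set q := kalscheuerUnit r a
  have hq : q ≠ 0 := kalscheuerUnit_ne_zero r a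
  set b := q * a⁻¹ * q⁻¹
  have hb : b ≠ 0 := by simp [b, hq, ha]
  have hqb : kalscheuerUnit r b = q⁻¹ :=
    kalscheuerUnit_of_norm_eq_inv r (by simp [b, q, kalscheuerUnit_norm])
  refine ⟨b, hb, ?_, ?_⟩
  · rw [kalscheuerMul_of_ne_zero r ha]
    change a * q⁻¹ * b * q = 1
    simp [b, mul_assoc, hq, ha]
  · rw [kalscheuerMul_of_ne_zero r hb, hqb, inv_inv]
    simp [b, mul_assoc, hq, ha]
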